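/- Let G = (A,B,C;E) be a bilaterally-complete tripartite graph with complete sides G[A∪B] and G[A∪C] and |A| = p, and let H(G) be its network graph. Then the minimum cardinality of an (s,t)-separator of H(G) equals τ△(G). -/

import Mathlib

open SimpleGraph

variable {V : Type*}

/-- The set of edges of a triangle, given by its vertex set `t`:
all unordered pairs of distinct vertices of `t`. -/
def triangleEdges (t : Finset V) : Set (Sym2 V) :=
  {e | ∃ u ∈ t, ∃ v ∈ t, u ≠ v ∧ e = s(u, v)}

/-- `E'` is a `𝒯`-transversal of `G`: a set of edges of `G` meeting every triangle of `G`. -/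
def IsTriTransversal (G : SimpleGraph V) (E' : Set (Sym2 V)) : Prop :=
  E' ⊆ G.edgeSet ∧ ∀ t : Finset V, G.IsNClique 3 t → ∃ e ∈ triangleEdges t, e ∈ E'

/-- `τ△ G`: the minimum cardinality of a `𝒯`-transversal of `G`. -/
noncomputable def triTransversalNum (G : SimpleGraph V) : ℕ :=
  sInf {n | ∃ E' : Set (Sym2 V), IsTriTransversal G E' ∧ E'.ncard = n}

/-- `P` is a packing in `G`: a set of triangles of `G` that are pairwise edge-disjoint. -/
def IsTriPacking (G : SimpleGraph V) (P : Set (Finset V)) : Prop :=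
  (∀ t ∈ P, G.IsNClique 3 t) ∧
    P.Pairwise fun t t' => Disjoint (triangleEdges t) (triangleEdges t')

/-- `ν△ G`: the maximum cardinality of a packing of triangles in `G`. -/
noncomputable def triPackingNum (G : SimpleGraph V) : ℕ :=
  sSup {n | ∃ P : Set (Finset V), IsTriPacking G P ∧ P.ncard = n}

/-- The set of edges of `G` with one endpoint in `M` and the other in `W`. -/
def edgesBetween (G : SimpleGraph V) (M W : Set V) : Set (Sym2 V) :=
  {e | e ∈ G.edgeSet ∧ ∃ u ∈ M, ∃ w ∈ W, e = s(u, w)}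

/-- `G` is tripartite with parts `A`, `B`, `C`: the vertex set is partitioned into
the three independent sets `A`, `B`, `C`. -/
def IsTripartition (G : SimpleGraph V) (A B C : Set V) : Prop :=
  A ∪ B ∪ C = Set.univ ∧ Disjoint A B ∧ Disjoint A C ∧ Disjoint B C ∧
    (∀ u ∈ A, ∀ v ∈ A, ¬G.Adj u v) ∧ (∀ u ∈ B, ∀ v ∈ B, ¬G.Adj u v) ∧
    (∀ u ∈ C, ∀ v ∈ C, ¬G.Adj u v)

/-- The side `G[X ∪ Y]` of a tripartite graph is a complete bipartite graph. -/
def CompleteSide (G : SimpleGraph V) (X Y : Set V) : Prop :=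
  ∀ x ∈ X, ∀ y ∈ Y, G.Adj x y

/-- `W` is a vertex cover of the subgraph edge-induced by the edge set `Y`. -/
def CoversEdges (W : Set V) (Y : Set (Sym2 V)) : Prop :=
  ∀ e ∈ Y, ∃ v ∈ W, v ∈ e

/-- `M` is a matching consisting of edges from the edge set `F`:
the edges of `M` are pairwise vertex-disjoint. -/
def IsMatchingIn (F : Set (Sym2 V)) (M : Set (Sym2 V)) : Prop :=
  M ⊆ F ∧ M.Pairwise fun e f => ∀ v, v ∈ e → v ∉ f
/-- The vertices of the network graph `H(G)`: a source, a sink, `p` copies of the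
`B`-side vertices, `p` copies of the `C`-side vertices, and one vertex for each
potential edge between `B` and `C`. -/
inductive NetVert (V : Type*) (p : ℕ) where
  | src : NetVert V p
  | snk : NetVert V p
  | bCopy (i : Fin p) (v : V) : NetVert V p
  | cCopy (i : Fin p) (v : V) : NetVert V p
  | mid (e : Sym2 V) : NetVert V p

/-- The arcs of the network graph `H(G)`: from the source to every copy of every
vertex of `B`; for every edge `e = uv ∈ E_BC` (`u ∈ B`, `v ∈ C`), from every copy of
`u` to the vertex corresponding to `e` and from that vertex to every copy of `v`;
and from every copy of every vertex of `C` to the sink. -/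
def netAdj (G : SimpleGraph V) (B C : Set V) (p : ℕ) :
    NetVert V p → NetVert V p → Prop
  | .src, .bCopy _ v => v ∈ B
  | .bCopy _ u, .mid e => u ∈ B ∧ e ∈ edgesBetween G B C ∧ u ∈ e
  | .mid e, .cCopy _ v => v ∈ C ∧ e ∈ edgesBetween G B C ∧ v ∈ e
  | .cCopy _ v, .snk => v ∈ C
  | _, _ => False

/-- The vertices of `H(G)` in `V_BC` corresponding to a set `S` of edges. -/
def midSet (S : Set (Sym2 V)) (p : ℕ) : Set (NetVert V p) :=
  {x | ∃ e ∈ S, x = NetVert.mid e}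

/-- The vertices of `H(G)` in `B_1 ∪ ⋯ ∪ B_p` that are copies of vertices in `S`. -/
def bCopySet (S : Set V) (p : ℕ) : Set (NetVert V p) :=
  {x | ∃ i : Fin p, ∃ v ∈ S, x = NetVert.bCopy i v}

/-- The vertices of `H(G)` in `C_1 ∪ ⋯ ∪ C_p` that are copies of vertices in `S`. -/
def cCopySet (S : Set V) (p : ℕ) : Set (NetVert V p) :=
  {x | ∃ i : Fin p, ∃ v ∈ S, x = NetVert.cCopy i v}

/-- `S` is an `(s,t)`-separator of the digraph with arc relation `Adj`: a set of
vertices distinct from `s` and `t` whose removal breaks all directed paths from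
`s` to `t`. -/
def IsSeparator {α : Type*} (Adj : α → α → Prop) (s t : α) (S : Set α) : Prop :=
  s ∉ S ∧ t ∉ S ∧
    ¬ Relation.ReflTransGen (fun u v => Adj u v ∧ u ∉ S ∧ v ∉ S) s t

/-!
An `s`–`t` path of `H(G)` is `s → bᵢ → bc → cⱼ → t` for an edge `bc ∈ E_BC`, so `S` is a
separator iff for every such edge `S` contains the vertex `bc`, all `p` copies of `b`, or all `p`
copies of `c`. Every triangle is `abc` with `a ∈ A`, so a separator `S` yields the transversal made
of the edges `bc` whose vertex lies in `S` and the `p` edges `ab` (resp. `ac`) for each `b`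
(resp. `c`) all of whose copies lie in `S`; it has at most `|S|` edges. Conversely, given a
transversal `E'`, the stars of `E'` at the `p` vertices of `A` are disjoint subsets of
`E' \ E_BC`, so some `a ∈ A` has `p · |N| ≤ |E' \ E_BC|` for its set `N` of neighbours through
`E'`; the vertices of `E' ∩ E_BC` together with all copies of `N` form a separator with at most
`|E'|` vertices.
-/

private def NetVert.encode {p : ℕ} : NetVert V p → Bool ⊕ (Fin p × V) ⊕ (Fin p × V) ⊕ Sym2 V
  | .src => .inl true
  | .snk => .inl false
  | .bCopy i v => .inr (.inl (i, v))
  | .cCopy i v => .inr (.inr (.inl (i, v)))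
  | .mid e => .inr (.inr (.inr e))

instance NetVert.instFinite [Finite V] {p : ℕ} : Finite (NetVert V p) :=
  Finite.of_injective NetVert.encode fun a b h => by
    cases a <;> cases b <;> simp_all [NetVert.encode]

theorem Set.exists_mul_ncard_le_ncard_biUnion {ι α : Type*} [Finite ι] [Finite α] {t : Set ι}
    (ht : t.Nonempty) {s : ι → Set α} (hs : t.PairwiseDisjoint s) :
    ∃ i ∈ t, t.ncard * (s i).ncard ≤ (⋃ i ∈ t, s i).ncard := by
  obtain ⟨i, hi, hmin⟩ := t.exists_min_image (fun i => (s i).ncard) t.toFinite ht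
  refine ⟨i, hi, ?_⟩
  rw [t.toFinite.ncard_biUnion (fun _ _ => toFinite _) hs,
    finsum_mem_eq_finite_toFinset_sum _ t.toFinite, ncard_eq_toFinset_card t]
  simpa using Finset.card_nsmul_le_sum _ _ _ fun j hj => hmin j (by simpa using hj)

theorem Nat.sInf_eq_of_forall_exists_le {s t : Set ℕ} (ht : t.Nonempty)
    (hst : ∀ m ∈ s, ∃ n ∈ t, n ≤ m) (hts : ∀ n ∈ t, ∃ m ∈ s, m ≤ n) : sInf s = sInf t := by
  obtain ⟨m, hm, hmt⟩ := hts _ (Nat.sInf_mem ht)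
  obtain ⟨n, hn, hns⟩ := hst _ (Nat.sInf_mem ⟨m, hm⟩)
  exact le_antisymm ((Nat.sInf_le hm).trans hmt) ((Nat.sInf_le hn).trans hns)

theorem isTriTransversal_edgeSet (G : SimpleGraph V) : IsTriTransversal G G.edgeSet := by
  refine ⟨subset_rfl, fun t ht => ?_⟩
  obtain ⟨u, hu, v, hv, huv⟩ := Finset.one_lt_card.1 (by rw [ht.card_eq]; norm_num)
  exact ⟨s(u, v), ⟨u, hu, v, hv, huv, rfl⟩, ht.isClique hu hv huv⟩

theorem eq_or_eq_or_eq_of_mem_triangleEdges [DecidableEq V] {a b c : V} {e : Sym2 V}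
    (he : e ∈ triangleEdges {a, b, c}) : e = s(a, b) ∨ e = s(a, c) ∨ e = s(b, c) := by
  obtain ⟨u, hu, v, hv, huv, rfl⟩ := he
  simp only [Finset.mem_insert, Finset.mem_singleton] at hu hv
  rcases hu with rfl | rfl | rfl <;> rcases hv with rfl | rfl | rfl <;>
    simp_all [Sym2.eq_swap]

theorem SimpleGraph.IsClique.ncard_inter_le_one {G : SimpleGraph V} {t : Finset V} {X : Set V}
    (ht : G.IsClique t) (hX : ∀ u ∈ X, ∀ v ∈ X, ¬G.Adj u v) : (↑t ∩ X).ncard ≤ 1 :=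
  (Set.ncard_le_one (t.finite_toSet.inter_of_left X)).2 fun u hu v hv =>
    by_contra fun huv => hX u hu.2 v hv.2 (ht hu.1 hv.1 huv)

theorem IsTripartition.exists_mem_of_isNClique_three {G : SimpleGraph V} {A B C : Set V}
    (hpart : IsTripartition G A B C) {t : Finset V} (ht : G.IsNClique 3 t) :
    ∃ a ∈ A, ∃ b ∈ B, ∃ c ∈ C, a ∈ t ∧ b ∈ t ∧ c ∈ t := by
  obtain ⟨hcover, -, -, -, hA, hB, hC⟩ := hpart
  have hA1 := ht.isClique.ncard_inter_le_one hA
  have hB1 := ht.isClique.ncard_inter_le_one hB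
  have hC1 := ht.isClique.ncard_inter_le_one hC
  have hsplit : (t : Set V) = ↑t ∩ A ∪ ↑t ∩ B ∪ ↑t ∩ C := by
    rw [← Set.inter_union_distrib_left, ← Set.inter_union_distrib_left, hcover, Set.inter_univ]
  have hsum : 3 ≤ (↑t ∩ A).ncard + (↑t ∩ B).ncard + (↑t ∩ C).ncard :=
    calc 3 = (t : Set V).ncard := by rw [Set.ncard_coe_finset, ht.card_eq]
      _ = (↑t ∩ A ∪ ↑t ∩ B ∪ ↑t ∩ C).ncard := by rw [← hsplit]
      _ ≤ _ := (Set.ncard_union_le _ _).trans (Nat.add_le_add_right (Set.ncard_union_le _ _) _)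
  obtain ⟨a, hat, ha⟩ := Set.nonempty_of_ncard_ne_zero (s := ↑t ∩ A) (by omega)
  obtain ⟨b, hbt, hb⟩ := Set.nonempty_of_ncard_ne_zero (s := ↑t ∩ B) (by omega)
  obtain ⟨c, hct, hc⟩ := Set.nonempty_of_ncard_ne_zero (s := ↑t ∩ C) (by omega)
  exact ⟨a, ha, b, hb, c, hc, hat, hbt, hct⟩

theorem adj_and_eq_of_mem_edgesBetween {G : SimpleGraph V} {B C : Set V} (hBC : Disjoint B C)
    {e : Sym2 V} (he : e ∈ edgesBetween G B C) {b c : V} (hb : b ∈ B) (hc : c ∈ C)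
    (hbe : b ∈ e) (hce : c ∈ e) : G.Adj b c ∧ e = s(b, c) := by
  obtain ⟨he, u, hu, w, hw, rfl⟩ := he
  rcases Sym2.mem_iff.1 hbe with rfl | rfl
  · rcases Sym2.mem_iff.1 hce with rfl | rfl
    · exact absurd hc (Set.disjoint_left.1 hBC hb)
    · exact ⟨he, rfl⟩
  · exact absurd hw (Set.disjoint_left.1 hBC hb)

section Network

variable {G : SimpleGraph V} {B C : Set V} {p : ℕ} {S : Set (NetVert V p)}

theorem reflTransGen_netAdj_src_snk_iff (hBC : Disjoint B C) (hs : .src ∉ S) (ht : .snk ∉ S) :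
    Relation.ReflTransGen (fun u v => netAdj G B C p u v ∧ u ∉ S ∧ v ∉ S) .src .snk ↔
      ∃ b ∈ B, ∃ c ∈ C, G.Adj b c ∧
        (∃ i, .bCopy i b ∉ S) ∧ .mid s(b, c) ∉ S ∧ ∃ j, .cCopy j c ∉ S := by
  constructor
  · intro h
    rcases h.cases_head with h | ⟨x, ⟨hsx, -, hx⟩, h⟩; · cases h
    cases x with
    | bCopy i b =>
      rcases h.cases_head with h | ⟨y, ⟨hxy, -, hy⟩, h⟩; · cases h
      cases y with
      | mid e =>
        rcases h.cases_head with h | ⟨z, ⟨hyz, -, hz⟩, h⟩; · cases h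
        cases z with
        | cCopy j c =>
          obtain ⟨hb, he, hbe⟩ := hxy
          obtain ⟨hc, -, hce⟩ := hyz
          obtain ⟨hbc, rfl⟩ := adj_and_eq_of_mem_edgesBetween hBC he hb hc hbe hce
          exact ⟨b, hb, c, hc, hbc, ⟨i, hx⟩, hy, j, hz⟩
        | _ => exact hyz.elim
      | _ => exact hxy.elim
    | _ => exact hsx.elim
  · rintro ⟨b, hb, c, hc, hbc, ⟨i, hi⟩, hm, j, hj⟩
    have he : s(b, c) ∈ edgesBetween G B C := ⟨hbc, b, hb, c, hc, rfl⟩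
    refine .head ⟨?_, hs, hi⟩ <| .head ⟨?_, hi, hm⟩ <| .head ⟨?_, hm, hj⟩ <|
      .head ⟨?_, hj, ht⟩ .refl
    exacts [hb, ⟨hb, he, Sym2.mem_mk_left b c⟩, ⟨hc, he, Sym2.mem_mk_right b c⟩, hc]

theorem isSeparator_netAdj_iff (hBC : Disjoint B C) :
    IsSeparator (netAdj G B C p) .src .snk S ↔ .src ∉ S ∧ .snk ∉ S ∧
      ∀ b ∈ B, ∀ c ∈ C, G.Adj b c →
        (∀ i, .bCopy i b ∈ S) ∨ .mid s(b, c) ∈ S ∨ ∀ j, .cCopy j c ∈ S := by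
  refine and_congr_right fun hs => and_congr_right fun ht => ?_
  rw [reflTransGen_netAdj_src_snk_iff hBC hs ht]
  simp only [not_exists, not_and, ← not_forall, imp_iff_not_or, not_not]

theorem ncard_midSet (F : Set (Sym2 V)) : (midSet F p).ncard = F.ncard := by
  have : midSet F p = NetVert.mid '' F := by ext; simp [midSet, eq_comm]
  rw [this, Set.ncard_image_of_injective _ fun _ _ => NetVert.mid.inj]

theorem ncard_bCopySet (X : Set V) : (bCopySet X p).ncard = p * X.ncard := by
  have : bCopySet X p = (fun q : Fin p × V => NetVert.bCopy q.1 q.2) '' (Set.univ ×ˢ X) := by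
    ext; simp [bCopySet, eq_comm]
  rw [this, Set.ncard_image_of_injective _ fun ⟨_, _⟩ ⟨_, _⟩ h => by cases h; rfl, Set.ncard_prod,
    Set.ncard_univ, Nat.card_fin]

theorem ncard_cCopySet (X : Set V) : (cCopySet X p).ncard = p * X.ncard := by
  have : cCopySet X p = (fun q : Fin p × V => NetVert.cCopy q.1 q.2) '' (Set.univ ×ˢ X) := by
    ext; simp [cCopySet, eq_comm]
  rw [this, Set.ncard_image_of_injective _ fun ⟨_, _⟩ ⟨_, _⟩ h => by cases h; rfl, Set.ncard_prod,
    Set.ncard_univ, Nat.card_fin]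

theorem ncard_midSet_union_bCopySet_union_cCopySet [Finite V] (F : Set (Sym2 V)) (X Y : Set V) :
    (midSet F p ∪ bCopySet X p ∪ cCopySet Y p).ncard = F.ncard + p * X.ncard + p * Y.ncard := by
  have hmb : Disjoint (midSet F p) (bCopySet X p) :=
    Set.disjoint_left.2 fun _ ⟨_, _, h⟩ ⟨_, _, _, h'⟩ => by cases h.symm.trans h'
  have hc : Disjoint (midSet F p ∪ bCopySet X p) (cCopySet Y p) := by
    refine Set.disjoint_left.2 fun _ hx ⟨_, _, _, h'⟩ => ?_
    rcases hx with ⟨_, _, h⟩ | ⟨_, _, _, h⟩ <;> cases h.symm.trans h'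
  rw [Set.ncard_union_eq hc, Set.ncard_union_eq hmb, ncard_midSet, ncard_bCopySet, ncard_cCopySet]

end Network

section Tripartite

variable {G : SimpleGraph V} {A B C : Set V} {p : ℕ}

theorem exists_isTriTransversal_ncard_le [Finite V] (hpart : IsTripartition G A B C)
    (hAB : CompleteSide G A B) (hAC : CompleteSide G A C) (hp : A.ncard = p)
    {S : Set (NetVert V p)} (hS : IsSeparator (netAdj G B C p) .src .snk S) :
    ∃ E' : Set (Sym2 V), IsTriTransversal G E' ∧ E'.ncard ≤ S.ncard := by
  have hBC : Disjoint B C := hpart.2.2.2.1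
  obtain ⟨-, -, hcut⟩ := (isSeparator_netAdj_iff hBC).1 hS
  set F : Set (Sym2 V) := {e ∈ G.edgeSet | .mid e ∈ S}
  set WB : Set V := {b ∈ B | ∀ i, .bCopy i b ∈ S}
  set WC : Set V := {c ∈ C | ∀ j, .cCopy j c ∈ S}
  refine ⟨F ∪ (fun q : V × V => s(q.1, q.2)) '' (A ×ˢ (WB ∪ WC)), ⟨?_, fun t ht => ?_⟩, ?_⟩
  · rintro _ (⟨he, -⟩ | ⟨⟨a, w⟩, ⟨ha, ⟨hw, -⟩ | ⟨hw, -⟩⟩, rfl⟩)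
    exacts [he, hAB a ha w hw, hAC a ha w hw]
  · obtain ⟨a, ha, b, hb, c, hc, hat, hbt, hct⟩ := hpart.exists_mem_of_isNClique_three ht
    have hbc : G.Adj b c :=
      ht.isClique hbt hct fun h => Set.disjoint_left.1 hBC hb (h ▸ hc)
    rcases hcut b hb c hc hbc with hB | hm | hC
    · exact ⟨s(a, b), ⟨a, hat, b, hbt, (hAB a ha b hb).ne, rfl⟩,
        .inr ⟨(a, b), ⟨ha, .inl ⟨hb, hB⟩⟩, rfl⟩⟩
    · exact ⟨s(b, c), ⟨b, hbt, c, hct, hbc.ne, rfl⟩, .inl ⟨hbc, hm⟩⟩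
    · exact ⟨s(a, c), ⟨a, hat, c, hct, (hAC a ha c hc).ne, rfl⟩,
        .inr ⟨(a, c), ⟨ha, .inr ⟨hc, hC⟩⟩, rfl⟩⟩
  · calc (F ∪ _).ncard ≤ F.ncard + (A ×ˢ (WB ∪ WC)).ncard :=
          (Set.ncard_union_le _ _).trans (Nat.add_le_add_left (Set.ncard_image_le) _)
      _ ≤ F.ncard + p * WB.ncard + p * WC.ncard := by
          rw [Set.ncard_prod, hp, add_assoc, ← mul_add]
          exact Nat.add_le_add_left (Nat.mul_le_mul_left _ (Set.ncard_union_le _ _)) _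
      _ = (midSet F p ∪ bCopySet WB p ∪ cCopySet WC p).ncard :=
          (ncard_midSet_union_bCopySet_union_cCopySet F WB WC).symm
      _ ≤ S.ncard := by
          refine Set.ncard_le_ncard ?_
          rintro _ ((⟨e, ⟨-, he⟩, rfl⟩ | ⟨i, b, ⟨-, hb⟩, rfl⟩) | ⟨j, c, ⟨-, hc⟩, rfl⟩)
          exacts [he, hb i, hc j]

theorem IsTripartition.exists_mul_ncard_neighbors_le [Finite V]
    (hpart : IsTripartition G A B C) {E' : Set (Sym2 V)} (hE' : E' ⊆ G.edgeSet) (hA : A.Nonempty) :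
    ∃ a ∈ A, A.ncard * {w | s(a, w) ∈ E'}.ncard ≤ (E' \ edgesBetween G B C).ncard := by
  obtain ⟨-, hAB, hAC, -, hAind, -, -⟩ := hpart
  have hdisj : A.PairwiseDisjoint fun a => {e ∈ E' | a ∈ e} := by
    refine fun a ha a' ha' hne => Set.disjoint_left.2 fun e ⟨heE, hae⟩ ⟨_, ha'e⟩ => ?_
    rw [(Sym2.mem_and_mem_iff hne).1 ⟨hae, ha'e⟩] at heE
    exact hAind a ha a' ha' (hE' heE)
  have hsub : (⋃ a ∈ A, ({e ∈ E' | a ∈ e} : Set (Sym2 V))) ⊆ E' \ edgesBetween G B C := by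
    simp only [Set.iUnion_subset_iff]
    rintro a ha e ⟨heE, hae⟩
    refine ⟨heE, ?_⟩
    rintro ⟨-, u, hu, w, hw, rfl⟩
    rcases Sym2.mem_iff.1 hae with rfl | rfl
    exacts [Set.disjoint_left.1 hAB ha hu, Set.disjoint_left.1 hAC ha hw]
  obtain ⟨a, ha, hle⟩ := Set.exists_mul_ncard_le_ncard_biUnion hA hdisj
  refine ⟨a, ha, le_trans ?_ (hle.trans (Set.ncard_le_ncard hsub))⟩
  refine Nat.mul_le_mul_left _ (Set.ncard_le_ncard_of_injOn (fun w => s(a, w)) ?_ ?_)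
  · exact fun w hw => ⟨hw, Sym2.mem_mk_left a w⟩
  · exact fun w _ w' _ h => Sym2.congr_right.1 h

theorem exists_isSeparator_ncard_le [Finite V] (hpart : IsTripartition G A B C)
    (hAB : CompleteSide G A B) (hAC : CompleteSide G A C) (hp : A.ncard = p)
    {E' : Set (Sym2 V)} (hE' : IsTriTransversal G E') :
    ∃ S : Set (NetVert V p), IsSeparator (netAdj G B C p) .src .snk S ∧ S.ncard ≤ E'.ncard := by
  classical
  have hBC : Disjoint B C := hpart.2.2.2.1
  rcases A.eq_empty_or_nonempty with rfl | hA
  · rw [Set.ncard_empty] at hp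
    subst hp
    exact ⟨∅, (isSeparator_netAdj_iff hBC).2 ⟨id, id, fun _ _ _ _ _ => .inl finZeroElim⟩,
      by simp⟩
  obtain ⟨a, ha, hcard⟩ := hpart.exists_mul_ncard_neighbors_le hE'.1 hA
  set W : Set V := {w | s(a, w) ∈ E'}
  set F : Set (Sym2 V) := E' ∩ edgesBetween G B C
  refine ⟨midSet F p ∪ bCopySet (W ∩ B) p ∪ cCopySet (W \ B) p,
    (isSeparator_netAdj_iff hBC).2 ⟨?_, ?_, fun b hb c hc hbc => ?_⟩, ?_⟩
  · rintro ((⟨_, _, h⟩ | ⟨_, _, _, h⟩) | ⟨_, _, _, h⟩) <;> cases h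
  · rintro ((⟨_, _, h⟩ | ⟨_, _, _, h⟩) | ⟨_, _, _, h⟩) <;> cases h
  · obtain ⟨e, he, heE⟩ :=
      hE'.2 {a, b, c} (is3Clique_triple_iff.2 ⟨hAB a ha b hb, hAC a ha c hc, hbc⟩)
    rcases eq_or_eq_or_eq_of_mem_triangleEdges he with rfl | rfl | rfl
    · exact .inl fun i => .inl (.inr ⟨i, b, ⟨heE, hb⟩, rfl⟩)
    · have hcB : c ∉ B := fun hcB => Set.disjoint_left.1 hBC hcB hc
      exact .inr (.inr fun j => .inr ⟨j, c, ⟨heE, hcB⟩, rfl⟩)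
    · exact .inr (.inl (.inl (.inl ⟨_, ⟨heE, hbc, b, hb, c, hc, rfl⟩, rfl⟩)))
  · calc _ = F.ncard + p * (W ∩ B).ncard + p * (W \ B).ncard :=
          ncard_midSet_union_bCopySet_union_cCopySet F _ _
      _ = F.ncard + A.ncard * W.ncard := by
          rw [hp, add_assoc, ← mul_add, Set.ncard_inter_add_ncard_sdiff_eq_ncard]
      _ ≤ F.ncard + (E' \ edgesBetween G B C).ncard := Nat.add_le_add_left hcard _
      _ = E'.ncard := Set.ncard_inter_add_ncard_sdiff_eq_ncard _ _

end Tripartite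

/-- The minimum cardinality of an `(s,t)`-separator of the network graph `H(G)` of a
bilaterally-complete tripartite graph `G` equals `τ△(G)`. -/
theorem min_separator_eq_tau [Fintype V] (G : SimpleGraph V)
    (A B C : Set V) (hpart : IsTripartition G A B C)
    (hAB : CompleteSide G A B) (hAC : CompleteSide G A C)
    (p : ℕ) (hp : A.ncard = p) :
    sInf {n : ℕ | ∃ S : Set (NetVert V p),
        IsSeparator (netAdj G B C p) NetVert.src NetVert.snk S ∧ S.ncard = n} =
      triTransversalNum G := by
  refine Nat.sInf_eq_of_forall_exists_le ⟨_, _, isTriTransversal_edgeSet G, rfl⟩ ?_ ?_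
  · rintro _ ⟨S, hS, rfl⟩
    obtain ⟨E', hE', hle⟩ := exists_isTriTransversal_ncard_le hpart hAB hAC hp hS
    exact ⟨_, ⟨E', hE', rfl⟩, hle⟩
  · rintro _ ⟨E', hE', rfl⟩
    obtain ⟨S, hS, hle⟩ := exists_isSeparator_ncard_le hpart hAB hAC hp hE'
    exact ⟨_, ⟨S, hS, rfl⟩, hle⟩
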